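/- Fix N ≥ 1 and n ≥ 1. Let w₁, …, wₙ be filters on ZMod N and p₁, …, pₙ natural numbers. Given a signal s : ZMod N → ℂ, define recursively s₀ = s, IMF_j = 𝒱_{w_j}^{p_j} s_{j−1}, and s_j = s_{j−1} − IMF_j for j = 1, …, n. Then for every character index k ∈ ZMod N: (ℱ(IMF_n))(k) = (1 − (ℱwₙ)(k))^{pₙ} · ∏_{j=1}^{n−1} (1 − (1 − (ℱw_j)(k))^{p_j}) · (ℱs)(k). -/

import Mathlib

open Finset

/-- The discrete Fourier transform on `ZMod N`:
`(ℱs)(k) = Σ_j s(j) exp(−2πi jk/N)`. -/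
noncomputable def discreteFourier (N : ℕ) [NeZero N] (s : ZMod N → ℂ) (k : ZMod N) : ℂ :=
  ∑ j : ZMod N,
    s j * Complex.exp (-(2 * (Real.pi : ℂ) * Complex.I * ((j.val : ℂ) * (k.val : ℂ)) / (N : ℂ)))

/-- The fluctuation operator `𝒱_w s = s − w ⋆ s` on `ZMod N`, for a real-valued
`w` acting on a complex signal `s`. -/
noncomputable def fluctuation {N : ℕ} [NeZero N] (w : ZMod N → ℝ) (s : ZMod N → ℂ) :
    ZMod N → ℂ :=
  fun g => s g - ∑ h : ZMod N, (w (g - h) : ℂ) * s h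

/-- The remainders of the iterative filtering scheme: `s₀ = s` and
`s_j = s_{j−1} − 𝒱_{w_j}^{p_j} s_{j−1}`. -/
noncomputable def remainder {N : ℕ} [NeZero N] (w : ℕ → ZMod N → ℝ) (p : ℕ → ℕ)
    (s : ZMod N → ℂ) : ℕ → (ZMod N → ℂ)
  | 0 => s
  | j + 1 => remainder w p s j - (fluctuation (w (j + 1)))^[p (j + 1)] (remainder w p s j)

/-- The `j`-th intrinsic mode function `IMF_j = 𝒱_{w_j}^{p_j} s_{j−1}` (for `j ≥ 1`). -/
noncomputable def imf {N : ℕ} [NeZero N] (w : ℕ → ZMod N → ℝ) (p : ℕ → ℕ)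
    (s : ZMod N → ℂ) (j : ℕ) : ZMod N → ℂ :=
  (fluctuation (w j))^[p j] (remainder w p s (j - 1))

/-!
Identifying `discreteFourier` with Mathlib's `ZMod.dft`, the convolution theorem turns `𝒱_w`
into multiplication by `1 - ℱw`. Hence each remainder step `s_j = s_{j-1} - 𝒱^{p_j} s_{j-1}`
multiplies the spectrum by `1 - (1 - ℱw_j)^{p_j}`, and the last mode by `(1 - ℱw_n)^{p_n}`.
-/

open ZMod

section

variable {N : ℕ} [NeZero N]

theorem discreteFourier_eq_dft (s : ZMod N → ℂ) : discreteFourier N s = 𝓕 s := by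
  ext k
  refine Finset.sum_congr rfl fun j _ => ?_
  have hchar : stdAddChar (-(j * k)) =
      Complex.exp (-(2 * (Real.pi : ℂ) * Complex.I * ((j.val : ℂ) * (k.val : ℂ)) / (N : ℂ))) := by
    have hcast : ((-(j.val * k.val : ℤ) : ℤ) : ZMod N) = -(j * k) := by
      push_cast; rw [natCast_zmod_val, natCast_zmod_val]
    rw [← hcast, stdAddChar_coe]
    push_cast; ring_nf
  rw [smul_eq_mul, hchar, mul_comm]

theorem dft_convolution (u v : ZMod N → ℂ) (k : ZMod N) :
    𝓕 (fun g => ∑ h, u (g - h) * v h) k = 𝓕 u k * 𝓕 v k := by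
  simp only [dft_apply, smul_eq_mul, Finset.mul_sum, Finset.sum_mul]
  rw [Finset.sum_comm]
  refine Finset.sum_congr rfl fun h _ => ?_
  rw [← Equiv.sum_comp (Equiv.addRight h)]
  refine Finset.sum_congr rfl fun d _ => ?_
  simp only [Equiv.coe_addRight, add_sub_cancel_right, add_mul, neg_add, AddChar.map_add_eq_mul]
  ring

theorem dft_fluctuation (w : ZMod N → ℝ) (s : ZMod N → ℂ) (k : ZMod N) :
    𝓕 (fluctuation w s) k = (1 - 𝓕 (fun g => (w g : ℂ)) k) * 𝓕 s k := by
  have hconv : fluctuation w s = s - fun g => ∑ h, (w (g - h) : ℂ) * s h := rfl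
  rw [hconv, map_sub, Pi.sub_apply, dft_convolution (fun g => (w g : ℂ))]
  ring

theorem dft_fluctuation_iterate (w : ZMod N → ℝ) (m : ℕ) (s : ZMod N → ℂ) (k : ZMod N) :
    𝓕 ((fluctuation w)^[m] s) k = (1 - 𝓕 (fun g => (w g : ℂ)) k) ^ m * 𝓕 s k := by
  induction m with
  | zero => simp
  | succ m ih => rw [Function.iterate_succ_apply', dft_fluctuation, ih, pow_succ']; ring

theorem dft_remainder (w : ℕ → ZMod N → ℝ) (p : ℕ → ℕ) (s : ZMod N → ℂ) (m : ℕ) (k : ZMod N) :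
    𝓕 (remainder w p s m) k =
      (∏ j ∈ Finset.Ico 1 (m + 1), (1 - (1 - 𝓕 (fun g => (w j g : ℂ)) k) ^ p j)) * 𝓕 s k := by
  induction m with
  | zero => simp [remainder]
  | succ m ih =>
    rw [remainder, map_sub, Pi.sub_apply, dft_fluctuation_iterate, ih,
      Finset.prod_Ico_succ_top (Nat.le_add_left 1 m)]
    ring

end

theorem dft_imf_general (N : ℕ) [NeZero N] (n : ℕ)
    (w : ℕ → ZMod N → ℝ) (p : ℕ → ℕ)
    (s : ZMod N → ℂ) (k : ZMod N) :
    discreteFourier N (imf w p s n) k =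
      (1 - discreteFourier N (fun g => (w n g : ℂ)) k) ^ (p n) *
        (∏ j ∈ Finset.Ico 1 n,
          (1 - (1 - discreteFourier N (fun g => (w j g : ℂ)) k) ^ (p j))) *
        discreteFourier N s k := by
  have hIco : Finset.Ico 1 (n - 1 + 1) = Finset.Ico 1 n := by rcases n with _ | n <;> simp
  simp only [discreteFourier_eq_dft]
  rw [imf, dft_fluctuation_iterate, dft_remainder, hIco, mul_assoc]

/-- Fourier-side formula for the `n`-th intrinsic mode function:
`ℱ(IMF_n)(k) = (1 − ℱwₙ(k))^{pₙ} · ∏_{j=1}^{n−1} (1 − (1 − ℱw_j(k))^{p_j}) · ℱs(k)`. -/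
theorem dft_imf (N : ℕ) [NeZero N] (hN : 1 ≤ N) (n : ℕ) (hn : 1 ≤ n)
    (w : ℕ → ZMod N → ℝ) (p : ℕ → ℕ)
    (hfilter : ∀ j, 1 ≤ j → j ≤ n →
      (∀ g, 0 ≤ w j g) ∧ (∀ g, w j (-g) = w j g) ∧ (∑ g : ZMod N, w j g = 1))
    (s : ZMod N → ℂ) (k : ZMod N) :
    discreteFourier N (imf w p s n) k =
      (1 - discreteFourier N (fun g => (w n g : ℂ)) k) ^ (p n) *
        (∏ j ∈ Finset.Ico 1 n,
          (1 - (1 - discreteFourier N (fun g => (w j g : ℂ)) k) ^ (p j))) *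
        discreteFourier N s k :=
  dft_imf_general N n w p s k
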